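/- Let 1 ≤ k ≤ n. The complementation map γ sending I to {[n] \ X : X ∈ I} is a bijection from C(n,k) to C*(n,n−k), and for all I, J ∈ C(n,k) one has I ≤ J in the single step inclusion order on C(n,k) if and only if γ(I) ≤ γ(J) in the single step inclusion order on C*(n,n−k); that is, γ is a poset isomorphism. -/

import Mathlib

open Finset

/-- The `k`-element subsets of `[n] = {1, …, n}`. -/
def ksubsets (n k : ℕ) : Finset (Finset ℕ) := (Finset.Icc 1 n).powersetCard k

/-- The packet of `X`: all subsets of `X` with one element removed. -/
def packet (X : Finset ℕ) : Finset (Finset ℕ) := X.image (fun x => X.erase x)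

/-- The copacket of `X` with respect to `[n]`: all sets `X ∪ {i}` for `i ∈ [n] \ X`. -/
def copacket (n : ℕ) (X : Finset ℕ) : Finset (Finset ℕ) :=
  ((Finset.Icc 1 n) \ X).image (fun i => insert i X)

/-- The lexicographic order on finite sets of naturals viewed as increasing lists:
`X < Y` iff there is `m ∈ X \ Y` below which `X` and `Y` agree. -/
def lexLt (X Y : Finset ℕ) : Prop :=
  ∃ m ∈ X, m ∉ Y ∧ ∀ a < m, (a ∈ X ↔ a ∈ Y)

/-- `r` is a strict linear order on the collection `D`. -/
def IsStrictOrdOn (D : Finset (Finset ℕ)) (r : Finset ℕ → Finset ℕ → Prop) : Prop :=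
  (∀ X ∈ D, ¬ r X X) ∧
  (∀ X ∈ D, ∀ Y ∈ D, ∀ Z ∈ D, r X Y → r Y Z → r X Z) ∧
  (∀ X ∈ D, ∀ Y ∈ D, X ≠ Y → r X Y ∨ r Y X)

/-- The restriction of `r` to `P` is the lex order. -/
def RestrLex (r : Finset ℕ → Finset ℕ → Prop) (P : Finset (Finset ℕ)) : Prop :=
  ∀ A ∈ P, ∀ B ∈ P, (r A B ↔ lexLt A B)

/-- The restriction of `r` to `P` is the antilex order. -/
def RestrAntilex (r : Finset ℕ → Finset ℕ → Prop) (P : Finset (Finset ℕ)) : Prop :=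
  ∀ A ∈ P, ∀ B ∈ P, (r A B ↔ lexLt B A)

/-- `r` is an admissible order on the `k`-element subsets of `[n]`. -/
def Admissible (n k : ℕ) (r : Finset ℕ → Finset ℕ → Prop) : Prop :=
  IsStrictOrdOn (ksubsets n k) r ∧
  ∀ X ∈ ksubsets n (k+1), RestrLex r (packet X) ∨ RestrAntilex r (packet X)

/-- `r` is a coadmissible order on the `k`-element subsets of `[n]`. -/
def Coadmissible (n k : ℕ) (r : Finset ℕ → Finset ℕ → Prop) : Prop :=
  IsStrictOrdOn (ksubsets n k) r ∧
  ∀ X ∈ ksubsets n (k-1), RestrLex r (copacket n X) ∨ RestrAntilex r (copacket n X)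

open scoped Classical in
/-- The reversal set of an order on the `k`-element subsets of `[n]`:
the `(k+1)`-element subsets whose packet is restricted to the antilex order. -/
noncomputable def Rev (n k : ℕ) (r : Finset ℕ → Finset ℕ → Prop) : Finset (Finset ℕ) :=
  (ksubsets n (k+1)).filter (fun X => RestrAntilex r (packet X))

open scoped Classical in
/-- The coreversal set of an order on the `k`-element subsets of `[n]`:
the `(k-1)`-element subsets whose copacket is restricted to the antilex order. -/
noncomputable def Corev (n k : ℕ) (r : Finset ℕ → Finset ℕ → Prop) : Finset (Finset ℕ) :=
  (ksubsets n (k-1)).filter (fun X => RestrAntilex r (copacket n X))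

/-- `P ∩ I` is a prefix (lower set) of `P` in lex order. -/
def IsLexPrefix (P I : Finset (Finset ℕ)) : Prop :=
  ∀ A ∈ P, ∀ B ∈ P, B ∈ I → lexLt A B → A ∈ I

/-- `P ∩ I` is a suffix (upper set) of `P` in lex order. -/
def IsLexSuffix (P I : Finset (Finset ℕ)) : Prop :=
  ∀ A ∈ P, ∀ B ∈ P, A ∈ I → lexLt A B → B ∈ I

/-- `I` is a consistent subset of the `k`-element subsets of `[n]`. -/
def Consistent (n k : ℕ) (I : Finset (Finset ℕ)) : Prop :=
  I ⊆ ksubsets n k ∧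
  ∀ X ∈ ksubsets n (k+1), IsLexPrefix (packet X) I ∨ IsLexSuffix (packet X) I

/-- `I` is a coconsistent subset of the `k`-element subsets of `[n]`. -/
def CoConsistent (n k : ℕ) (I : Finset (Finset ℕ)) : Prop :=
  I ⊆ ksubsets n k ∧
  ∀ X ∈ ksubsets n (k-1), IsLexPrefix (copacket n X) I ∨ IsLexSuffix (copacket n X) I

/-- Deletion `I \ n` of a set of subsets. -/
def del (I : Finset (Finset ℕ)) (n : ℕ) : Finset (Finset ℕ) := I.filter (fun X => n ∉ X)

/-- Contraction `I / n` of a set of subsets. -/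
def contr (I : Finset (Finset ℕ)) (n : ℕ) : Finset (Finset ℕ) :=
  (I.filter (fun X => n ∈ X)).image (fun X => X.erase n)

/-- Contraction `ρ / n` of a linear order: `X < Y` iff `X ∪ {n} < Y ∪ {n}` in `ρ`. -/
def contrOrd (r : Finset ℕ → Finset ℕ → Prop) (n : ℕ) : Finset ℕ → Finset ℕ → Prop :=
  fun X Y => r (insert n X) (insert n Y)

/-- The Gale order: componentwise comparison of the increasing enumerations. -/
def galeLe (A B : Finset ℕ) : Prop :=
  List.Forall₂ (· ≤ ·) (A.sort (· ≤ ·)) (B.sort (· ≤ ·))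

/-- The consistent poset relation `≺_I` on the `(k-1)`-element subsets of `[n]`:
within the packet of `X ∈ I` the antilex order, and within the packet of
`X ∉ I` the lex order, transitively closed. -/
def cpRel (n k : ℕ) (I : Finset (Finset ℕ)) : Finset ℕ → Finset ℕ → Prop :=
  Relation.TransGen (fun A B =>
    ∃ X ∈ ksubsets n k, A ∈ packet X ∧ B ∈ packet X ∧
      ((X ∈ I ∧ lexLt B A) ∨ (X ∉ I ∧ lexLt A B)))

/-- A single-step-inclusion cover within the collection `C`. -/
def SSIStep (C : Finset (Finset ℕ) → Prop) (A B : Finset (Finset ℕ)) : Prop :=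
  C A ∧ C B ∧ ∃ Y, Y ∉ A ∧ B = insert Y A

/-- The single step inclusion order on the collection `C`. -/
def SSILe (C : Finset (Finset ℕ) → Prop) : Finset (Finset ℕ) → Finset (Finset ℕ) → Prop :=
  Relation.ReflTransGen (SSIStep C)

/-! Complementation `X ↦ [n] \ X` is an involution on the subsets of `[n]` which reverses the
lex order and exchanges the packet of `X` with the copacket of `[n] \ X`. Hence it turns lex
prefixes of packets into lex suffixes of copackets and vice versa, so it carries consistent
families onto coconsistent ones and back; being injective, it also preserves single step
inclusions in both directions. -/

def cmpl (n : ℕ) (X : Finset ℕ) : Finset ℕ := Icc 1 n \ X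

section Complement

variable {n k : ℕ} {X A B : Finset ℕ} {P I : Finset (Finset ℕ)}

theorem mem_ksubsets : X ∈ ksubsets n k ↔ X ⊆ Icc 1 n ∧ X.card = k :=
  mem_powersetCard

theorem cmpl_subset_Icc : cmpl n X ⊆ Icc 1 n := sdiff_subset

theorem cmpl_cmpl (hX : X ⊆ Icc 1 n) : cmpl n (cmpl n X) = X := by
  rw [cmpl, cmpl, sdiff_sdiff_right_self, inf_eq_inter, inter_eq_right.mpr hX]

theorem cmpl_mem_ksubsets (hX : X ∈ ksubsets n k) : cmpl n X ∈ ksubsets n (n - k) := by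
  obtain ⟨hsub, hcard⟩ := mem_ksubsets.mp hX
  refine mem_ksubsets.mpr ⟨cmpl_subset_Icc, ?_⟩
  rw [cmpl, card_sdiff_of_subset hsub, hcard, Nat.card_Icc, Nat.add_sub_cancel]

theorem cmpl_injOn : Set.InjOn (cmpl n) {X | X ⊆ Icc 1 n} :=
  Set.LeftInvOn.injOn fun _ hX => cmpl_cmpl hX

theorem image_cmpl_image_cmpl (hI : ∀ X ∈ I, X ⊆ Icc 1 n) :
    (I.image (cmpl n)).image (cmpl n) = I := by
  rw [image_image]
  conv_rhs => rw [← image_id (s := I)]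
  exact image_congr fun X hX => cmpl_cmpl (hI X hX)

theorem cmpl_mem_image_cmpl_iff (hI : ∀ X ∈ I, X ⊆ Icc 1 n) (hA : A ⊆ Icc 1 n) :
    cmpl n A ∈ I.image (cmpl n) ↔ A ∈ I := by
  refine ⟨fun h => ?_, mem_image_of_mem _⟩
  obtain ⟨Z, hZ, hZA⟩ := mem_image.mp h
  rwa [← cmpl_injOn (hI Z hZ) hA hZA]

theorem lexLt_cmpl_iff (hA : A ⊆ Icc 1 n) (hB : B ⊆ Icc 1 n) :
    lexLt (cmpl n A) (cmpl n B) ↔ lexLt B A := by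
  constructor
  · rintro ⟨m, hmA, hmB, hagree⟩
    simp only [cmpl, mem_sdiff, not_and, not_not] at hmA hmB hagree
    exact ⟨m, hmB (hmA.1), hmA.2, fun a ha => by have := hagree a ha; tauto⟩
  · rintro ⟨m, hmB, hmA, hagree⟩
    refine ⟨m, by simp [cmpl, hmA, hB hmB], by simp [cmpl, hmB], fun a ha => ?_⟩
    simp [cmpl, hagree a ha]

theorem image_cmpl_packet (hX : X ⊆ Icc 1 n) :
    (packet X).image (cmpl n) = copacket n (cmpl n X) := by
  rw [packet, copacket, image_image, show Icc 1 n \ cmpl n X = X from cmpl_cmpl hX]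
  refine image_congr fun x hx => ?_
  have hxn : x ∈ Icc 1 n := hX hx
  ext a
  simp only [Function.comp_apply, cmpl, mem_sdiff, mem_erase, mem_insert]
  by_cases hax : a = x
  · simp [hax, hxn]
  · simp [hax]

theorem image_cmpl_copacket :
    (copacket n X).image (cmpl n) = packet (cmpl n X) := by
  rw [packet, copacket, image_image]
  refine image_congr fun i _ => ?_
  ext a
  simp only [Function.comp_apply, cmpl, mem_sdiff, mem_erase, mem_insert]
  tauto

theorem IsLexPrefix.image_cmpl (hP : ∀ A ∈ P, A ⊆ Icc 1 n) (hI : ∀ A ∈ I, A ⊆ Icc 1 n)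
    (h : IsLexPrefix P I) : IsLexSuffix (P.image (cmpl n)) (I.image (cmpl n)) := by
  simp only [IsLexSuffix, forall_mem_image]
  intro A hA B hB hAI hlt
  rw [cmpl_mem_image_cmpl_iff hI (hP A hA)] at hAI
  rw [lexLt_cmpl_iff (hP A hA) (hP B hB)] at hlt
  exact (cmpl_mem_image_cmpl_iff hI (hP B hB)).mpr (h B hB A hA hAI hlt)

theorem IsLexSuffix.image_cmpl (hP : ∀ A ∈ P, A ⊆ Icc 1 n) (hI : ∀ A ∈ I, A ⊆ Icc 1 n)
    (h : IsLexSuffix P I) : IsLexPrefix (P.image (cmpl n)) (I.image (cmpl n)) := by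
  simp only [IsLexPrefix, forall_mem_image]
  intro A hA B hB hBI hlt
  rw [cmpl_mem_image_cmpl_iff hI (hP B hB)] at hBI
  rw [lexLt_cmpl_iff (hP A hA) (hP B hB)] at hlt
  exact (cmpl_mem_image_cmpl_iff hI (hP A hA)).mpr (h B hB A hA hBI hlt)

theorem isLexPrefix_or_isLexSuffix_image_cmpl (hP : ∀ A ∈ P, A ⊆ Icc 1 n)
    (hI : ∀ A ∈ I, A ⊆ Icc 1 n) (h : IsLexPrefix P I ∨ IsLexSuffix P I) :
    IsLexPrefix (P.image (cmpl n)) (I.image (cmpl n)) ∨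
      IsLexSuffix (P.image (cmpl n)) (I.image (cmpl n)) :=
  h.symm.imp (·.image_cmpl hP hI) (·.image_cmpl hP hI)

theorem Consistent.subset_Icc (hI : Consistent n k I) :
    ∀ X ∈ I, X ⊆ Icc 1 n :=
  fun _ hX => (mem_ksubsets.mp (hI.1 hX)).1

theorem CoConsistent.subset_Icc (hI : CoConsistent n k I) :
    ∀ X ∈ I, X ⊆ Icc 1 n :=
  fun _ hX => (mem_ksubsets.mp (hI.1 hX)).1

theorem image_cmpl_subset_ksubsets (hI : I ⊆ ksubsets n k) :
    I.image (cmpl n) ⊆ ksubsets n (n - k) :=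
  image_subset_iff.mpr fun _ hX => cmpl_mem_ksubsets (hI hX)

theorem packet_subset_Icc (hX : X ⊆ Icc 1 n) :
    ∀ A ∈ packet X, A ⊆ Icc 1 n := by
  simp only [packet, forall_mem_image]
  exact fun x _ => (erase_subset x X).trans hX

theorem copacket_subset_Icc (hX : X ⊆ Icc 1 n) :
    ∀ A ∈ copacket n X, A ⊆ Icc 1 n := by
  simp only [copacket, forall_mem_image, mem_sdiff]
  exact fun i hi => insert_subset hi.1 hX

theorem Consistent.coConsistent_image_cmpl (hkn : k ≤ n)
    (hI : Consistent n k I) : CoConsistent n (n - k) (I.image (cmpl n)) := by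
  refine ⟨image_cmpl_subset_ksubsets hI.1, fun X hX => ?_⟩
  have hXsub := (mem_ksubsets.mp hX).1
  rcases hkn.lt_or_eq with hlt | rfl
  · have hXc : cmpl n X ∈ ksubsets n (k + 1) := by
      convert cmpl_mem_ksubsets hX using 2
      omega
    have h := isLexPrefix_or_isLexSuffix_image_cmpl (packet_subset_Icc cmpl_subset_Icc)
      hI.subset_Icc (hI.2 _ hXc)
    rwa [image_cmpl_packet cmpl_subset_Icc, cmpl_cmpl hXsub] at h
  · -- for `k = n` the image is `{∅}` or empty and meets no copacket
    refine Or.inl fun A _ B hB hBI _ => absurd hBI fun hBI => ?_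
    have hB0 : B.card = 0 := by
      simpa using (mem_ksubsets.mp (image_cmpl_subset_ksubsets hI.1 hBI)).2
    obtain ⟨i, _, rfl⟩ := mem_image.mp hB
    simp at hB0

theorem CoConsistent.consistent_image_cmpl (hkn : k ≤ n)
    (hI : CoConsistent n (n - k) I) : Consistent n k (I.image (cmpl n)) := by
  refine ⟨?_, fun X hX => ?_⟩
  · simpa [Nat.sub_sub_self hkn] using image_cmpl_subset_ksubsets hI.1
  have hXsub := (mem_ksubsets.mp hX).1
  have hXc : cmpl n X ∈ ksubsets n (n - k - 1) := by
    rw [Nat.sub_sub]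
    exact cmpl_mem_ksubsets hX
  have h := isLexPrefix_or_isLexSuffix_image_cmpl (copacket_subset_Icc cmpl_subset_Icc)
    hI.subset_Icc (hI.2 _ hXc)
  rwa [image_cmpl_copacket, cmpl_cmpl hXsub] at h

end Complement

section SingleStepInclusion

variable {C D : Finset (Finset ℕ) → Prop} {f : Finset ℕ → Finset ℕ}

theorem SSIStep.image (hCD : ∀ I, C I → D (I.image f)) (hf : ∀ I, C I → Set.InjOn f I)
    {A B : Finset (Finset ℕ)} (h : SSIStep C A B) : SSIStep D (A.image f) (B.image f) := by
  obtain ⟨hA, hB, Y, hY, rfl⟩ := h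
  refine ⟨hCD _ hA, hCD _ hB, f Y, fun hfY => hY ?_, image_insert f Y A⟩
  obtain ⟨Z, hZ, hZY⟩ := mem_image.mp hfY
  rwa [← hf _ hB (mem_insert_of_mem hZ) (mem_insert_self Y A) hZY]

theorem SSILe.image (hCD : ∀ I, C I → D (I.image f)) (hf : ∀ I, C I → Set.InjOn f I)
    {A B : Finset (Finset ℕ)} (h : SSILe C A B) : SSILe D (A.image f) (B.image f) := by
  unfold SSILe at *
  exact Relation.ReflTransGen.lift (·.image f) (fun _ _ => SSIStep.image hCD hf) A B h

end SingleStepInclusion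

theorem complementation_poset_isomorphism_general (n k : ℕ) (hkn : k ≤ n) :
    (∀ I, Consistent n k I →
        CoConsistent n (n - k) (I.image (fun X => Finset.Icc 1 n \ X))) ∧
    (∀ I J, Consistent n k I → Consistent n k J →
        I.image (fun X => Finset.Icc 1 n \ X) = J.image (fun X => Finset.Icc 1 n \ X) →
        I = J) ∧
    (∀ J, CoConsistent n (n - k) J →
        ∃ I, Consistent n k I ∧ I.image (fun X => Finset.Icc 1 n \ X) = J) ∧
    (∀ I J, Consistent n k I → Consistent n k J →
        (SSILe (Consistent n k) I J ↔
          SSILe (CoConsistent n (n - k))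
            (I.image (fun X => Finset.Icc 1 n \ X))
            (J.image (fun X => Finset.Icc 1 n \ X)))) := by
  rw [show (fun X => Icc 1 n \ X) = cmpl n from rfl]
  have injOn_of_subset_Icc {I : Finset (Finset ℕ)} (hI : ∀ X ∈ I, X ⊆ Icc 1 n) :
      Set.InjOn (cmpl n) I :=
    cmpl_injOn.mono fun X hX => hI X hX
  refine ⟨fun I hI => hI.coConsistent_image_cmpl hkn, fun I J hI hJ hIJ => ?_,
    fun J hJ => ⟨_, hJ.consistent_image_cmpl hkn, image_cmpl_image_cmpl hJ.subset_Icc⟩,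
    fun I J hI hJ => ⟨SSILe.image (fun _ h => h.coConsistent_image_cmpl hkn)
      (fun _ h => injOn_of_subset_Icc h.subset_Icc), fun h => ?_⟩⟩
  · rw [← image_cmpl_image_cmpl hI.subset_Icc, hIJ, image_cmpl_image_cmpl hJ.subset_Icc]
  · have h' := SSILe.image (fun _ h => h.consistent_image_cmpl hkn)
      (fun _ h => injOn_of_subset_Icc h.subset_Icc) h
    rwa [image_cmpl_image_cmpl hI.subset_Icc, image_cmpl_image_cmpl hJ.subset_Icc] at h'

/-- Complementation `I ↦ {[n] \ X : X ∈ I}` is a bijection from the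
consistent subsets of `k`-element subsets of `[n]` onto the coconsistent subsets of
`(n-k)`-element subsets of `[n]`, and it is a poset isomorphism for the respective
single step inclusion orders. -/
theorem complementation_poset_isomorphism (n k : ℕ) (hk : 1 ≤ k) (hkn : k ≤ n) :
    (∀ I, Consistent n k I →
        CoConsistent n (n - k) (I.image (fun X => Finset.Icc 1 n \ X))) ∧
    (∀ I J, Consistent n k I → Consistent n k J →
        I.image (fun X => Finset.Icc 1 n \ X) = J.image (fun X => Finset.Icc 1 n \ X) →
        I = J) ∧
    (∀ J, CoConsistent n (n - k) J →
        ∃ I, Consistent n k I ∧ I.image (fun X => Finset.Icc 1 n \ X) = J) ∧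
    (∀ I J, Consistent n k I → Consistent n k J →
        (SSILe (Consistent n k) I J ↔
          SSILe (CoConsistent n (n - k))
            (I.image (fun X => Finset.Icc 1 n \ X))
            (J.image (fun X => Finset.Icc 1 n \ X)))) :=
  complementation_poset_isomorphism_general n k hkn
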